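/- There exists a constant C > 0 such that for all integers r, α, β with 1 ≤ β ≤ α/2, 2β ≤ α ≤ r, and r − α even, if H is chosen uniformly at random from ℋ_{α,β,r}, then the probability that every vertex of H has even degree (equivalently, that H belongs to 𝒢_{α,β,r}) is at least 2^{−C·r}. -/

import Mathlib

open scoped BigOperators Classical
noncomputable section

namespace FHGraph

def edgeGraph (α r : ℕ) (f : Fin r → Sym2 (Fin α)) : SimpleGraph (Fin α) where
  Adj v w := v ≠ w ∧ ∃ p, f p = s(v, w)
  symm := by
    refine ⟨?_⟩
    rintro v w ⟨hvw, p, hp⟩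
    exact ⟨hvw.symm, p, by rw [hp, Sym2.eq_swap]⟩
  loopless := ⟨by rintro v ⟨h, -⟩; exact h rfl⟩

def edgeDeg (α r : ℕ) (f : Fin r → Sym2 (Fin α)) (v : Fin α) : ℕ :=
  (Finset.univ.filter (fun p : Fin r => v ∈ f p)).card

def numCC (α r : ℕ) (f : Fin r → Sym2 (Fin α)) : ℕ :=
  Nat.card (edgeGraph α r f).ConnectedComponent

def Gfam (α β r : ℕ) : Set (Fin r → Sym2 (Fin α)) :=
  {f | (∀ p, ¬ (f p).IsDiag) ∧ (∀ v, ∃ p, v ∈ f p) ∧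
    (∀ v, Even (edgeDeg α r f v)) ∧ numCC α r f = β}

def Delta (α β r : ℕ) : ℝ :=
  (α:ℝ)^(2*α) / (β:ℝ)^β * (((α:ℝ) - 2*β)^2 + 4*((α:ℝ) - β))^(r - α)

/-- The simple graph underlying the multigraph consisting of the first `α` edges of `f`. -/
def firstGraph (α r : ℕ) (f : Fin r → Sym2 (Fin α)) : SimpleGraph (Fin α) where
  Adj v w := v ≠ w ∧ ∃ p : Fin r, (p:ℕ) < α ∧ f p = s(v, w)
  symm := by
    refine ⟨?_⟩
    rintro v w ⟨hvw, p, hpα, hp⟩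
    exact ⟨hvw.symm, p, hpα, by rw [hp, Sym2.eq_swap]⟩
  loopless := ⟨by rintro v ⟨h, -⟩; exact h rfl⟩

/-- Degree (with multiplicity) of `v` among the first `α` edges of `f`. -/
def firstDeg (α r : ℕ) (f : Fin r → Sym2 (Fin α)) (v : Fin α) : ℕ :=
  (Finset.univ.filter (fun p : Fin r => (p:ℕ) < α ∧ v ∈ f p)).card

/-- `ℋ_{α,β,r}`: edge-labeled loopless multigraphs on `[α]` with `r` labeled edges such that the
first `α` edges form a disjoint union of `β` simple cycles, each spanning the vertex set of one
connected component (equivalently: among the first `α` edges every vertex has degree exactly two,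
the graph they form has exactly `β` connected components of which `β−1` have exactly two vertices
and one has `α − 2(β−1)` vertices), and every remaining edge joins two vertices lying in the same
connected component. -/
def Hfam (α β r : ℕ) : Set (Fin r → Sym2 (Fin α)) :=
  {f | (∀ p, ¬ (f p).IsDiag) ∧
    (∀ v, firstDeg α r f v = 2) ∧
    Nat.card (firstGraph α r f).ConnectedComponent = β ∧
    (∃ c₀ : (firstGraph α r f).ConnectedComponent,
      Nat.card c₀.supp = α - 2*(β - 1) ∧
      ∀ c : (firstGraph α r f).ConnectedComponent, c ≠ c₀ → Nat.card c.supp = 2) ∧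
    (∀ p : Fin r, α ≤ (p:ℕ) → ∀ v w : Fin α, v ∈ f p → w ∈ f p →
      (firstGraph α r f).Reachable v w)}


end FHGraph

/-!
Write `r = α + 2h` and split `H ∈ ℋ_{α,β,r}` into its first `α` edges `d` and two blocks `t₁, t₂`
of `h` further edges each. Membership in `ℋ` only asks that `d` be a cycle cover of the required
shape and that every further edge lie inside a component of `d`, so for fixed `d` the two blocks
range independently over the same set `A` of sequences. As `d` gives every vertex degree 2, all
degrees of `H` are even iff `t₁` and `t₂` have the same degree-parity vector in `{0,1}^α`, and by
Cauchy–Schwarz over the `2^α` parity vectors at least `|A|² / 2^α` of the pairs do. So the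
proportion is at least `2^{-α} ≥ 2^{-r}` once `ℋ` is nonempty, and a cycle cover with the
prescribed component sizes is given by the edges `{i, σ i}` of a permutation `σ` with cycle
lengths `α - 2(β-1), 2, …, 2`.
-/

namespace Finset

lemma sq_card_le_card_mul_card_filter_eq {A B : Type*} [Fintype B] [DecidableEq B]
    (s : Finset A) (π : A → B) :
    #s ^ 2 ≤ Fintype.card B * #((s ×ˢ s).filter fun p => π p.1 = π p.2) := by
  have hpairs : #((s ×ˢ s).filter fun p => π p.1 = π p.2) = ∑ b, #(s.filter (π · = b)) ^ 2 := by
    rw [card_eq_sum_card_fiberwise (f := fun p => π p.1) (t := univ) fun _ _ => mem_univ _]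
    refine sum_congr rfl fun b _ => ?_
    rw [sq, ← card_product]
    congr 1
    ext ⟨x, y⟩
    simp only [mem_filter, mem_product]
    grind
  rw [hpairs, card_eq_sum_card_fiberwise (f := π) (t := univ) fun _ _ => mem_univ _]
  exact sq_sum_le_card_mul_sum_sq

end Finset

namespace Equiv.Perm

lemma sameCycle_permCongrHom_iff {V W : Type*} (e : V ≃ W) (τ : Perm V) (v w : W) :
    (e.permCongrHom τ).SameCycle v w ↔ τ.SameCycle (e.symm v) (e.symm w) := by
  refine exists_congr fun i => ?_
  rw [← map_zpow, permCongrHom_coe, permCongr_apply, ← Equiv.eq_symm_apply]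

lemma sameCycle_sigmaCongrRight_iff {ι : Type*} {β : ι → Type*} (τ : ∀ j, Perm (β j))
    (hτ : ∀ j a b, (τ j).SameCycle a b) (x y : Σ j, β j) :
    (sigmaCongrRight τ).SameCycle x y ↔ x.1 = y.1 := by
  have hpow (i : ℤ) : sigmaCongrRight τ ^ i = sigmaCongrRight (τ ^ i) :=
    (map_zpow (sigmaCongrRightHom β) τ i).symm
  constructor
  · rintro ⟨i, rfl⟩
    rw [hpow]
    rfl
  · obtain ⟨j, a⟩ := x
    obtain ⟨k, b⟩ := y
    rintro (rfl : j = k)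
    obtain ⟨i, hi⟩ := hτ j a b
    exact ⟨i, by rw [hpow, Equiv.sigmaCongrRight_apply]; exact congrArg (Sigma.mk j) hi⟩

lemma exists_perm_with_cycle_lengths {ι : Type*} [Fintype ι] {α : ℕ} (n : ι → ℕ)
    (hn : ∀ j, 2 ≤ n j) (hsum : ∑ j, n j = α) :
    ∃ (σ : Perm (Fin α)) (ℓ : Fin α → ι), (∀ v, σ v ≠ v) ∧
      (∀ v w, σ.SameCycle v w ↔ ℓ v = ℓ w) ∧ ∀ j, Nat.card {v // ℓ v = j} = n j := by
  have hrot (j : ι) (a : Fin (n j)) : finRotate (n j) a ≠ a := by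
    rw [← mem_support, support_finRotate_of_le (hn j)]
    exact Finset.mem_univ a
  let e : (Σ j, Fin (n j)) ≃ Fin α := Fintype.equivFinOfCardEq (by simp [hsum])
  let τ : Perm (Σ j, Fin (n j)) := sigmaCongrRight fun j => finRotate (n j)
  refine ⟨e.permCongrHom τ, fun v => (e.symm v).1, fun v => ?_, fun v w => ?_, fun j => ?_⟩
  · rw [permCongrHom_coe, permCongr_apply, Ne, ← Equiv.eq_symm_apply, Equiv.sigmaCongrRight_apply]
    exact fun h => hrot _ _ (eq_of_heq (Sigma.mk.inj h).2)
  · refine (sameCycle_permCongrHom_iff e τ v w).trans (sameCycle_sigmaCongrRight_iff _ ?_ _ _)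
    exact fun j a b => (isCycle_finRotate_of_le (hn j)).sameCycle (hrot j a) (hrot j b)
  · rw [Nat.card_congr ((e.symm.subtypeEquiv fun _ => Iff.rfl).trans (sigmaSubtype j)),
      Nat.card_eq_fintype_card, Fintype.card_fin]

end Equiv.Perm

namespace SimpleGraph

variable {V ι : Type*} {G : SimpleGraph V} {ℓ : V → ι}

lemma supp_connectedComponentMk_of_reachable_iff (hℓ : ∀ v w, G.Reachable v w ↔ ℓ v = ℓ w)
    (v : V) : (G.connectedComponentMk v).supp = {w | ℓ w = ℓ v} := by
  ext w
  rw [ConnectedComponent.mem_supp_iff, ConnectedComponent.eq, hℓ]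
  rfl

lemma card_connectedComponent_of_reachable_iff (hℓ : ∀ v w, G.Reachable v w ↔ ℓ v = ℓ w)
    (hsurj : Function.Surjective ℓ) : Nat.card G.ConnectedComponent = Nat.card ι := by
  refine Nat.card_congr (Equiv.ofBijective
    (ConnectedComponent.lift ℓ fun v w p _ => (hℓ v w).1 p.reachable) ⟨?_, ?_⟩)
  · intro c c'
    induction c using ConnectedComponent.ind
    induction c' using ConnectedComponent.ind
    exact fun h => ConnectedComponent.sound ((hℓ _ _).2 h)
  · intro j
    obtain ⟨v, rfl⟩ := hsurj j
    exact ⟨G.connectedComponentMk v, rfl⟩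

end SimpleGraph

namespace FHGraph

open Finset

variable {α : ℕ}

lemma edgeDeg_append {m n : ℕ} (s : Fin m → Sym2 (Fin α)) (t : Fin n → Sym2 (Fin α))
    (v : Fin α) :
    edgeDeg α (m + n) (Fin.append s t) v = edgeDeg α m s v + edgeDeg α n t v := by
  simp only [edgeDeg, card_filter, Fin.sum_univ_add, Fin.append_left, Fin.append_right]

lemma firstDeg_append {m : ℕ} (d : Fin α → Sym2 (Fin α)) (t : Fin m → Sym2 (Fin α))
    (v : Fin α) : firstDeg α (α + m) (Fin.append d t) v = edgeDeg α α d v := by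
  simp only [firstDeg, edgeDeg, card_filter, Fin.sum_univ_add, Fin.append_left, Fin.append_right,
    Fin.val_castAdd, Fin.val_natAdd, Fin.is_lt, true_and, add_lt_iff_neg_left, not_lt_zero,
    false_and, if_false, sum_const_zero, add_zero]

lemma firstGraph_append {m : ℕ} (d : Fin α → Sym2 (Fin α)) (t : Fin m → Sym2 (Fin α)) :
    firstGraph α (α + m) (Fin.append d t) = edgeGraph α α d := by
  ext v w
  simp only [firstGraph, edgeGraph]
  refine and_congr_right fun _ => ⟨?_, fun ⟨i, hi⟩ => ⟨Fin.castAdd m i, by simpa using hi⟩⟩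
  rintro ⟨p, hp, hpe⟩
  refine Fin.addCases (fun i hp hpe => ⟨i, by simpa using hpe⟩) (fun j hp _ => ?_) p hp hpe
  simp at hp

def IsCycleCover (β : ℕ) (d : Fin α → Sym2 (Fin α)) : Prop :=
  (∀ i, ¬ (d i).IsDiag) ∧ (∀ v, edgeDeg α α d v = 2) ∧
    Nat.card (edgeGraph α α d).ConnectedComponent = β ∧
    ∃ c₀ : (edgeGraph α α d).ConnectedComponent, Nat.card c₀.supp = α - 2 * (β - 1) ∧
      ∀ c, c ≠ c₀ → Nat.card c.supp = 2

def internalEdges (d : Fin α → Sym2 (Fin α)) : Set (Sym2 (Fin α)) :=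
  {e | ¬ e.IsDiag ∧ ∀ v ∈ e, ∀ w ∈ e, (edgeGraph α α d).Reachable v w}

lemma append_mem_Hfam_iff {β m : ℕ} (d : Fin α → Sym2 (Fin α)) (t : Fin m → Sym2 (Fin α)) :
    Fin.append d t ∈ Hfam α β (α + m) ↔ IsCycleCover β d ∧ ∀ i, t i ∈ internalEdges d := by
  simp only [Hfam, Set.mem_ofPred_eq]
  rw [firstGraph_append]
  simp only [IsCycleCover, internalEdges, Set.mem_ofPred_eq, firstDeg_append, Fin.forall_fin_add,
    Fin.append_left, Fin.append_right, Fin.val_castAdd, Fin.val_natAdd, le_add_iff_nonneg_right,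
    zero_le, forall_const, Fin.is_lt, not_le.2, IsEmpty.forall_iff, implies_true, true_and,
    forall_and]
  tauto

lemma mem_internalEdges_self {d : Fin α → Sym2 (Fin α)} {i : Fin α} (hi : ¬ (d i).IsDiag) :
    d i ∈ internalEdges d := by
  refine ⟨hi, ?_⟩
  induction h : d i using Sym2.ind with
  | h a b =>
    have hab : (edgeGraph α α d).Reachable a b :=
      (show (edgeGraph α α d).Adj a b from ⟨by simpa [h] using hi, i, h⟩).reachable
    simp only [Sym2.mem_iff]
    rintro v (rfl | rfl) w (rfl | rfl)
    exacts [.rfl, hab, hab.symm, .rfl]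

lemma card_piFinset_le_two_pow_mul_card_even (E : Finset (Sym2 (Fin α))) (h : ℕ) :
    #(Fintype.piFinset fun _ : Fin (h + h) => E) ≤
      2 ^ α * #((Fintype.piFinset fun _ : Fin (h + h) => E).filter
        fun t => ∀ v, Even (edgeDeg α (h + h) t v)) := by
  set A := Fintype.piFinset fun _ : Fin h => E
  have hcard : #(Fintype.piFinset fun _ : Fin (h + h) => E) = #A ^ 2 := by
    simp only [A, Fintype.card_piFinset_const, ← pow_mul, mul_two]
  have heven : #((Fintype.piFinset fun _ : Fin (h + h) => E).filter
      fun t => ∀ v, Even (edgeDeg α (h + h) t v)) =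
      #((A ×ˢ A).filter fun p => (fun v => Even (edgeDeg α h p.1 v)) =
        fun v => Even (edgeDeg α h p.2 v)) := by
    refine (card_equiv (Fin.appendEquiv h h) fun p => ?_).symm
    simp only [A, mem_filter, mem_product, Fintype.mem_piFinset, Fin.appendEquiv, Equiv.coe_fn_mk,
      Fin.forall_fin_add, Fin.append_left, Fin.append_right, edgeDeg_append, Nat.even_add,
      funext_iff, eq_iff_iff, and_assoc]
  rw [hcard, heven]
  simpa [Fintype.card_fun] using sq_card_le_card_mul_card_filter_eq A
    fun s v => Even (edgeDeg α h s v)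

lemma ncard_eq_sum_card_append {X : Type*} [Fintype X] {m : ℕ}
    (S : Set (Fin (α + m) → X)) [DecidablePred (· ∈ S)] :
    S.ncard = ∑ d : Fin α → X, #(univ.filter fun t : Fin m → X => Fin.append d t ∈ S) := by
  rw [Set.ncard_eq_toFinset_card', ← Set.filter_mem_univ_eq_toFinset,
    card_equiv (Fin.appendEquiv α m).symm (s := univ.filter (· ∈ S))
      (t := univ.filter fun p => Fin.append p.1 p.2 ∈ S) (by simp [Fin.append_castAdd_natAdd]),
    card_filter, Fintype.sum_prod_type]
  simp only [card_filter]

lemma card_append_mem_Hfam_le {β : ℕ} (h : ℕ) (d : Fin α → Sym2 (Fin α)) :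
    #(univ.filter fun t : Fin (h + h) → Sym2 (Fin α) => Fin.append d t ∈ Hfam α β (α + (h + h)))
      ≤ 2 ^ α * #(univ.filter fun t : Fin (h + h) → Sym2 (Fin α) => Fin.append d t ∈
        Hfam α β (α + (h + h)) ∩ {f | ∀ v, Even (edgeDeg α (α + (h + h)) f v)}) := by
  by_cases hd : IsCycleCover β d
  · have hmem (t : Fin (h + h) → Sym2 (Fin α)) : Fin.append d t ∈ Hfam α β (α + (h + h)) ↔
        t ∈ Fintype.piFinset fun _ => (internalEdges d).toFinset := by
      simp [append_mem_Hfam_iff, hd]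
    have heven (t : Fin (h + h) → Sym2 (Fin α)) :
        (∀ v, Even (edgeDeg α _ (Fin.append d t) v)) ↔ ∀ v, Even (edgeDeg α (h + h) t v) := by
      simp [edgeDeg_append, hd.2.1, Nat.even_add]
    simp only [Set.mem_inter_iff, Set.mem_ofPred_eq, hmem, heven, filter_univ_mem]
    rw [← filter_filter, filter_univ_mem]
    exact card_piFinset_le_two_pow_mul_card_even _ h
  · simp [append_mem_Hfam_iff, hd]

lemma ncard_Hfam_le_two_pow_mul_ncard_even (β h : ℕ) :
    (Hfam α β (α + (h + h))).ncard ≤ 2 ^ α *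
      (Hfam α β (α + (h + h)) ∩ {f | ∀ v, Even (edgeDeg α (α + (h + h)) f v)}).ncard := by
  rw [ncard_eq_sum_card_append, ncard_eq_sum_card_append, mul_sum]
  exact sum_le_sum fun d _ => card_append_mem_Hfam_le h d

section Permutation

open Equiv Equiv.Perm

def cycleEdges (σ : Perm (Fin α)) : Fin α → Sym2 (Fin α) := fun i => s(i, σ i)

variable (σ : Perm (Fin α))

lemma edgeDeg_cycleEdges (hσ : ∀ v, σ v ≠ v) (v : Fin α) : edgeDeg α α (cycleEdges σ) v = 2 := by
  have : univ.filter (fun i => v ∈ cycleEdges σ i) = {v, σ.symm v} := by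
    ext i
    simp [cycleEdges, Sym2.mem_iff, eq_comm (a := v), Equiv.eq_symm_apply]
  rw [edgeDeg, this, card_pair fun h => hσ v (by simpa using congrArg σ h)]

lemma reachable_cycleEdges_iff (v w : Fin α) :
    (edgeGraph α α (cycleEdges σ)).Reachable v w ↔ σ.SameCycle v w := by
  constructor
  · rintro ⟨p⟩
    induction p with
    | nil => exact .refl _ _
    | cons hadj _ ih =>
      obtain ⟨-, i, hi⟩ := hadj
      refine .trans ?_ ih
      rcases Sym2.eq_iff.1 hi with ⟨rfl, rfl⟩ | ⟨rfl, rfl⟩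
      exacts [sameCycle_apply_right.2 (.refl _ _), (sameCycle_apply_right.2 (.refl _ _)).symm]
  · intro hvw
    obtain ⟨n, rfl⟩ := hvw.exists_nat_pow_eq
    clear hvw
    induction n with
    | zero => exact .rfl
    | succ n ih =>
      refine ih.trans ?_
      rw [pow_succ', Perm.mul_apply]
      by_cases h : σ ((σ ^ n) v) = (σ ^ n) v
      · rw [h]
      · exact SimpleGraph.Adj.reachable ⟨Ne.symm h, _, rfl⟩

end Permutation

lemma exists_isCycleCover {β : ℕ} (hβ : 1 ≤ β) (hαβ : 2 * β ≤ α) :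
    ∃ d : Fin α → Sym2 (Fin α), IsCycleCover β d := by
  set n : Option (Fin (β - 1)) → ℕ := fun j => j.elim (α - 2 * (β - 1)) fun _ => 2
  have hn (j) : 2 ≤ n j := by cases j <;> simp only [n, Option.elim] <;> omega
  obtain ⟨σ, ℓ, hσ, hℓ, hfiber⟩ := Equiv.Perm.exists_perm_with_cycle_lengths (α := α) n hn (by
    simp only [n, Fintype.sum_option, Option.elim, sum_const, card_univ, Fintype.card_fin,
      smul_eq_mul]
    omega)
  have hreach (v w : Fin α) : (edgeGraph α α (cycleEdges σ)).Reachable v w ↔ ℓ v = ℓ w :=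
    (reachable_cycleEdges_iff σ v w).trans (hℓ v w)
  have hsurj : Function.Surjective ℓ := fun j => by
    obtain ⟨⟨v, hv⟩⟩ := (Nat.card_pos_iff.1 (by rw [hfiber]; linarith [hn j])).1
    exact ⟨v, hv⟩
  obtain ⟨v₀, hv₀⟩ := hsurj none
  refine ⟨cycleEdges σ, fun i => by simpa [cycleEdges] using (hσ i).symm,
    edgeDeg_cycleEdges σ hσ, ?_, (edgeGraph α α _).connectedComponentMk v₀, ?_, fun c hc => ?_⟩
  · rw [SimpleGraph.card_connectedComponent_of_reachable_iff hreach hsurj,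
      Nat.card_eq_fintype_card, Fintype.card_option, Fintype.card_fin]
    omega
  · rw [SimpleGraph.supp_connectedComponentMk_of_reachable_iff hreach, hv₀]
    exact hfiber none
  · induction c using SimpleGraph.ConnectedComponent.ind with | h v => ?_
    rw [SimpleGraph.supp_connectedComponentMk_of_reachable_iff hreach]
    obtain ⟨j, hj⟩ := Option.ne_none_iff_exists'.1 fun h : ℓ v = none =>
      hc (SimpleGraph.ConnectedComponent.sound ((hreach v v₀).2 (h.trans hv₀.symm)))
    rw [hj]
    exact hfiber (some j)

lemma Hfam_nonempty {β : ℕ} (m : ℕ) (hβ : 1 ≤ β) (hαβ : 2 * β ≤ α) :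
    (Hfam α β (α + m)).Nonempty := by
  obtain ⟨d, hd⟩ := exists_isCycleCover hβ hαβ
  let i : Fin α := ⟨0, by omega⟩
  exact ⟨Fin.append d fun _ => d i,
    (append_mem_Hfam_iff d _).2 ⟨hd, fun _ => mem_internalEdges_self (hd.1 i)⟩⟩

theorem Hfam_even_degree_prob :
    ∃ C : ℝ, 0 < C ∧ ∀ r α β : ℕ, 1 ≤ β → 2*β ≤ α → α ≤ r → Even (r - α) →
      (2:ℝ)^(-(C * r)) ≤
        (((Hfam α β r ∩ {f | ∀ v, Even (edgeDeg α r f v)}).ncard : ℝ) /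
          ((Hfam α β r).ncard : ℝ)) := by
  refine ⟨1, one_pos, fun r α β hβ hαβ hαr heven => ?_⟩
  obtain ⟨h, rfl⟩ : ∃ h, r = α + (h + h) := by
    obtain ⟨h, hh⟩ := heven
    exact ⟨h, by omega⟩
  have hpos : (0 : ℝ) < (Hfam α β (α + (h + h))).ncard := by
    exact_mod_cast (Hfam_nonempty _ hβ hαβ).ncard_pos (Set.toFinite _)
  have hcount := ncard_Hfam_le_two_pow_mul_ncard_even (α := α) β h
  have hscale : (2:ℝ) ^ (-(1 * ((α + (h + h) : ℕ) : ℝ))) * 2 ^ α ≤ 1 := by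
    rw [one_mul, Real.rpow_neg zero_le_two, Real.rpow_natCast, inv_mul_le_one₀ (by positivity)]
    exact pow_le_pow_right₀ one_le_two (by omega)
  rw [le_div_iff₀ hpos]
  calc _ ≤ (2:ℝ) ^ (-(1 * ((α + (h + h) : ℕ) : ℝ))) *
        (2 ^ α * (Hfam α β (α + (h + h)) ∩ {f | ∀ v, Even (edgeDeg α _ f v)}).ncard) := by
        gcongr
        exact_mod_cast hcount
    _ ≤ _ := by
        rw [← mul_assoc]
        exact mul_le_of_le_one_left (by positivity) hscale

end FHGraph
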